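/- Let T be a rooted tree with branching-ruin number b and fix δ > b. Consider a percolation (not necessarily independent) on T such that P(e ∈ C(ρ) | parent of e ∈ C(ρ)) = ψ(e) > 0 with ψ(e) = 1 - δ/|e| whenever |e| > n₀ for some integer n₀ > 1. Then RT(T, ψ) < 1, and the percolation is subcritical. -/

import Mathlib

open MeasureTheory ProbabilityTheory Finset ENNReal

/-- An abstract infinite, locally finite, rooted tree, described through its set of
edges `E`, the generation `gen e` (distance of the far endpoint of `e` from the root)
and the parent map on edges. -/
structure CKTree where
  E : Type
  gen : E → ℕ
  gen_pos : ∀ e, 1 ≤ gen e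
  parent : E → E
  parent_gen : ∀ e, 1 < gen e → gen (parent e) + 1 = gen e
  locally_finite : ∀ n, {e | gen e = n}.Finite
  infinite : Infinite E

namespace CKTree

/-- `g ≤ e` : `g` lies on the path from the root to `e`. -/
def ple (T : CKTree) (g e : T.E) : Prop := ∃ k < T.gen e, T.parent^[k] e = g

/-- A ray in the tree: an infinite self-avoiding path started at the root. -/
def IsRay (T : CKTree) (r : ℕ → T.E) : Prop :=
  (∀ k, T.gen (r k) = k + 1) ∧ ∀ k, T.parent (r (k + 1)) = r k

/-- A cutset: a set of edges crossed exactly once by every ray. -/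
def IsCutset (T : CKTree) (π : Finset T.E) : Prop :=
  ∀ r : ℕ → T.E, T.IsRay r → ∃! k, r k ∈ π

/-- The product of `ψ` over the edges of the path from the root to `e`. -/
noncomputable def pathProd (T : CKTree) (ψ : T.E → ℝ) (e : T.E) : ℝ :=
  ∏ k ∈ Finset.range (T.gen e), ψ (T.parent^[k] e)

/-- The infimum over cutsets of the cutset sums of `f`. -/
noncomputable def cutInf (T : CKTree) (f : T.E → ℝ) : ℝ :=
  sInf ((fun π : Finset T.E => ∑ e ∈ π, f e) '' {π | T.IsCutset π})

/-- The branching number of the tree. -/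
noncomputable def br (T : CKTree) : ℝ≥0∞ :=
  sSup {x : ℝ≥0∞ | ∃ γ : ℝ, 0 < γ ∧ x = ENNReal.ofReal γ ∧
    0 < T.cutInf (fun e => γ ^ (-(T.gen e : ℝ)))}

/-- The branching-ruin number of the tree. -/
noncomputable def brr (T : CKTree) : ℝ≥0∞ :=
  sSup {x : ℝ≥0∞ | ∃ γ : ℝ, 0 < γ ∧ x = ENNReal.ofReal γ ∧
    0 < T.cutInf (fun e => (T.gen e : ℝ) ^ (-γ))}

/-- The quantity `RT(T, ψ)`. -/
noncomputable def RT (T : CKTree) (ψ : T.E → ℝ) : ℝ≥0∞ :=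
  sSup {x : ℝ≥0∞ | ∃ γ : ℝ, 0 < γ ∧ x = ENNReal.ofReal γ ∧
    0 < T.cutInf (fun e => T.pathProd ψ e ^ γ)}

end CKTree
namespace CKTree

lemma gen_iterate (T : CKTree) (e : T.E) : ∀ k, k < T.gen e →
    T.gen (T.parent^[k] e) = T.gen e - k := by
  intro k
  induction k with
  | zero => simp
  | succ k ih =>
    intro hk
    rw [Function.iterate_succ_apply']
    have h1 : T.gen (T.parent^[k] e) = T.gen e - k := ih (by omega)
    have h2 : 1 < T.gen (T.parent^[k] e) := by omega
    have := T.parent_gen _ h2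
    omega

lemma finite_gen_le (T : CKTree) (N : ℕ) : {e : T.E | T.gen e ≤ N}.Finite := by
  have hsub : {e : T.E | T.gen e ≤ N} ⊆ ⋃ n ∈ Finset.range (N + 1), {e : T.E | T.gen e = n} := by
    intro e he
    simp only [Set.mem_setOf_eq] at he
    simp only [Set.mem_iUnion, Finset.mem_range, Set.mem_setOf_eq]
    exact ⟨T.gen e, by omega, rfl⟩
  exact (Set.Finite.biUnion (Finset.range (N + 1)).finite_toSet
    (fun n _ => T.locally_finite n)).subset hsub

lemma exists_gen_gt (T : CKTree) {S : Set T.E} (hS : S.Infinite) (N : ℕ) :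
    ∃ e ∈ S, N < T.gen e := by
  by_contra h
  push_neg at h
  exact hS ((T.finite_gen_le N).subset h)

lemma exists_gen_eq (T : CKTree) (n : ℕ) (hn : 1 ≤ n) : ∃ e : T.E, T.gen e = n := by
  have : Infinite T.E := T.infinite
  obtain ⟨e, -, he⟩ := T.exists_gen_gt (S := Set.univ) Set.infinite_univ n
  refine ⟨T.parent^[T.gen e - n] e, ?_⟩
  rw [T.gen_iterate e (T.gen e - n) (by omega)]
  omega

lemma level_one_cutset (T : CKTree) : T.IsCutset (T.locally_finite 1).toFinset := by
  intro r hr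
  refine ⟨0, ?_, ?_⟩
  · simp only [Set.Finite.mem_toFinset, Set.mem_setOf_eq]
    exact hr.1 0
  · intro k hk
    simp only [Set.Finite.mem_toFinset, Set.mem_setOf_eq] at hk
    have := hr.1 k
    omega

lemma cutsums_nonempty (T : CKTree) (f : T.E → ℝ) :
    ((fun π : Finset T.E => ∑ e ∈ π, f e) '' {π | T.IsCutset π}).Nonempty :=
  ⟨_, ⟨(T.locally_finite 1).toFinset, T.level_one_cutset, rfl⟩⟩

lemma cutsums_bddBelow (T : CKTree) {f : T.E → ℝ} (hf : ∀ e, 0 ≤ f e) :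
    BddBelow ((fun π : Finset T.E => ∑ e ∈ π, f e) '' {π | T.IsCutset π}) := by
  refine ⟨0, ?_⟩
  rintro x ⟨π, -, rfl⟩
  exact Finset.sum_nonneg fun e _ => hf e

lemma exists_cutset_small (T : CKTree) {b γ : ℝ} (hb : 0 ≤ b)
    (hbrr : T.brr = ENNReal.ofReal b) (hγ : b < γ) {ε : ℝ} (hε : 0 < ε) :
    ∃ π : Finset T.E, T.IsCutset π ∧ ∑ e ∈ π, (T.gen e : ℝ) ^ (-γ) < ε := by
  set f : T.E → ℝ := fun e => (T.gen e : ℝ) ^ (-γ) with hf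
  have hf0 : ∀ e, 0 ≤ f e := fun e => Real.rpow_nonneg (Nat.cast_nonneg _) _
  have hinf : T.cutInf f ≤ 0 := by
    by_contra h
    push_neg at h
    have hmem : ENNReal.ofReal γ ∈ {x : ℝ≥0∞ | ∃ γ' : ℝ, 0 < γ' ∧ x = ENNReal.ofReal γ' ∧
        0 < T.cutInf (fun e => (T.gen e : ℝ) ^ (-γ'))} := ⟨γ, lt_of_le_of_lt hb hγ, rfl, h⟩
    have hle : ENNReal.ofReal γ ≤ T.brr := le_sSup hmem
    rw [hbrr] at hle
    have : γ ≤ b := (ENNReal.ofReal_le_ofReal_iff hb).1 hle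
    linarith
  have hlt : sInf ((fun π : Finset T.E => ∑ e ∈ π, f e) '' {π | T.IsCutset π}) < ε :=
    lt_of_le_of_lt hinf hε
  obtain ⟨x, ⟨π, hπ, rfl⟩, hx⟩ :=
    (csInf_lt_iff (T.cutsums_bddBelow hf0) (T.cutsums_nonempty f)).1 hlt
  exact ⟨π, hπ, hx⟩

lemma pathProd_succ (T : CKTree) (ψ : T.E → ℝ) (e : T.E) (h : 1 < T.gen e) :
    T.pathProd ψ e = ψ e * T.pathProd ψ (T.parent e) := by
  have hg : T.gen (T.parent e) + 1 = T.gen e := T.parent_gen e h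
  unfold pathProd
  rw [← hg, Finset.prod_range_succ']
  simp only [Function.iterate_succ_apply, Function.iterate_zero_apply]
  ring

lemma pathProd_nonneg (T : CKTree) {ψ : T.E → ℝ} (hψ : ∀ e, 0 < ψ e ∧ ψ e ≤ 1) (e : T.E) :
    0 ≤ T.pathProd ψ e :=
  Finset.prod_nonneg fun k _ => (hψ _).1.le

lemma pathProd_le_one (T : CKTree) {ψ : T.E → ℝ} (hψ : ∀ e, 0 < ψ e ∧ ψ e ≤ 1) (e : T.E) :
    T.pathProd ψ e ≤ 1 :=
  Finset.prod_le_one (fun k _ => (hψ _).1.le) (fun k _ => (hψ _).2)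

end CKTree

/-- The product `∏_{n₀ < j ≤ n} (1 - δ/j)`. -/
noncomputable def Pb (n₀ : ℕ) (δ : ℝ) (n : ℕ) : ℝ := ∏ j ∈ Finset.Ioc n₀ n, (1 - δ / (j : ℝ))

lemma Pb_eq_one {n₀ n : ℕ} (δ : ℝ) (h : n ≤ n₀) : Pb n₀ δ n = 1 := by
  unfold Pb
  rw [Finset.Ioc_eq_empty (by omega), Finset.prod_empty]

lemma Pb_factor_pos {n₀ j : ℕ} {δ : ℝ} (hδlt : δ < (n₀ : ℝ) + 1) (hj : n₀ < j) :
    0 < 1 - δ / (j : ℝ) := by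
  have hj0 : (0 : ℝ) < (j : ℝ) := by exact_mod_cast (by omega : 0 < j)
  have hδj : δ / (j : ℝ) < 1 := by
    rw [div_lt_one hj0]
    have : (n₀ : ℝ) + 1 ≤ (j : ℝ) := by exact_mod_cast hj
    linarith
  linarith

lemma Pb_nonneg {n₀ n : ℕ} {δ : ℝ} (hδlt : δ < (n₀ : ℝ) + 1) : 0 ≤ Pb n₀ δ n :=
  Finset.prod_nonneg fun j hj => (Pb_factor_pos hδlt (Finset.mem_Ioc.1 hj).1).le

lemma Pb_succ {n₀ n : ℕ} (δ : ℝ) (h : n₀ ≤ n) :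
    Pb n₀ δ (n + 1) = Pb n₀ δ n * (1 - δ / ((n : ℝ) + 1)) := by
  unfold Pb
  rw [Finset.prod_Ioc_succ_top h]
  push_cast
  ring

lemma harm_lb (n₀ : ℕ) : ∀ n, n₀ ≤ n →
    Real.log ((n : ℝ) + 1) - Real.log ((n₀ : ℝ) + 1) ≤ ∑ j ∈ Finset.Ioc n₀ n, 1 / (j : ℝ) := by
  intro n hn
  induction n, hn using Nat.le_induction with
  | base => simp
  | succ n hn ih =>
    rw [Finset.sum_Ioc_succ_top hn]
    have hp : (0 : ℝ) < (n : ℝ) + 1 := by positivity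
    have hlog : Real.log ((n : ℝ) + 1 + 1) - Real.log ((n : ℝ) + 1) ≤ 1 / ((n : ℝ) + 1) := by
      have h1 := Real.log_le_sub_one_of_pos (show (0 : ℝ) < ((n : ℝ) + 1 + 1) / ((n : ℝ) + 1) by positivity)
      rw [Real.log_div (by positivity) (ne_of_gt hp)] at h1
      have h2 : ((n : ℝ) + 1 + 1) / ((n : ℝ) + 1) - 1 = 1 / ((n : ℝ) + 1) := by field_simp; ring
      linarith
    push_cast
    linarith

lemma Pb_le {n₀ n : ℕ} {δ : ℝ} (hδ0 : 0 < δ) (hδlt : δ < (n₀ : ℝ) + 1) (hn : 1 ≤ n) :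
    Pb n₀ δ n ≤ ((n₀ : ℝ) + 1) ^ δ * (n : ℝ) ^ (-δ) := by
  have hn0 : (0 : ℝ) < (n : ℝ) := by exact_mod_cast hn
  have hn₀0 : (0 : ℝ) < (n₀ : ℝ) + 1 := by positivity
  by_cases hcase : n ≤ n₀
  · rw [Pb_eq_one δ hcase]
    have hb : (n : ℝ) ^ δ ≤ ((n₀ : ℝ) + 1) ^ δ := by
      apply Real.rpow_le_rpow hn0.le _ hδ0.le
      have : (n : ℝ) ≤ (n₀ : ℝ) := by exact_mod_cast hcase
      linarith
    rw [Real.rpow_neg hn0.le, ← div_eq_mul_inv,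
      le_div_iff₀ (Real.rpow_pos_of_pos hn0 δ), one_mul]
    exact hb
  · push_neg at hcase
    have h1 : Pb n₀ δ n ≤ ∏ j ∈ Finset.Ioc n₀ n, Real.exp (-(δ / (j : ℝ))) := by
      apply Finset.prod_le_prod
      · exact fun j hj => (Pb_factor_pos hδlt (Finset.mem_Ioc.1 hj).1).le
      · intro j hj
        have := Real.add_one_le_exp (-(δ / (j : ℝ)))
        linarith
    rw [← Real.exp_sum] at h1
    have h2 : ∑ j ∈ Finset.Ioc n₀ n, -(δ / (j : ℝ)) = -δ * ∑ j ∈ Finset.Ioc n₀ n, 1 / (j : ℝ) := by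
      rw [Finset.mul_sum]
      exact Finset.sum_congr rfl fun j _ => by ring
    have h4 := harm_lb n₀ n hcase.le
    have h5 : -δ * ∑ j ∈ Finset.Ioc n₀ n, 1 / (j : ℝ) ≤
        -δ * (Real.log (n : ℝ) - Real.log ((n₀ : ℝ) + 1)) := by
      have hlog : Real.log (n : ℝ) ≤ Real.log ((n : ℝ) + 1) :=
        Real.log_le_log hn0 (by linarith)
      nlinarith
    have h6 : Pb n₀ δ n ≤ Real.exp (-δ * (Real.log (n : ℝ) - Real.log ((n₀ : ℝ) + 1))) := by
      rw [h2] at h1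
      exact h1.trans (Real.exp_le_exp.2 h5)
    have h7 : Real.exp (-δ * (Real.log (n : ℝ) - Real.log ((n₀ : ℝ) + 1))) =
        ((n₀ : ℝ) + 1) ^ δ * (n : ℝ) ^ (-δ) := by
      rw [Real.rpow_def_of_pos hn₀0, Real.rpow_def_of_pos hn0, ← Real.exp_add]
      ring_nf
    rw [h7] at h6
    exact h6

namespace CKTree

lemma pathProd_le_Pb (T : CKTree) {ψ : T.E → ℝ} {n₀ : ℕ} {δ : ℝ} (hn₀ : 1 ≤ n₀)
    (hψ : ∀ e, 0 < ψ e ∧ ψ e ≤ 1) (hδlt : δ < (n₀ : ℝ) + 1)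
    (hψform : ∀ e, n₀ < T.gen e → ψ e = 1 - δ / (T.gen e : ℝ)) :
    ∀ n, ∀ e : T.E, T.gen e = n → T.pathProd ψ e ≤ Pb n₀ δ n := by
  intro n
  induction n using Nat.strong_induction_on with
  | _ n ih =>
    intro e hen
    by_cases hcase : n ≤ n₀
    · rw [Pb_eq_one δ hcase]
      exact T.pathProd_le_one hψ e
    · push_neg at hcase
      have h1n : 1 < T.gen e := by have := T.gen_pos e; omega
      have hpg := T.parent_gen e h1n
      have hstep := T.pathProd_succ ψ e h1n
      have hparent : T.pathProd ψ (T.parent e) ≤ Pb n₀ δ (n - 1) :=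
        ih (n - 1) (by omega) _ (by omega)
      have hform : ψ e = 1 - δ / (n : ℝ) := by rw [hψform e (by omega), hen]
      have hPb : Pb n₀ δ n = Pb n₀ δ (n - 1) * (1 - δ / (n : ℝ)) := by
        have := Pb_succ (n₀ := n₀) δ (n := n - 1) (by omega)
        rw [show n - 1 + 1 = n by omega] at this
        rw [this]
        congr 2
        push_cast [show ((n - 1 : ℕ) : ℝ) = (n : ℝ) - 1 by push_cast [Nat.cast_sub (by omega : 1 ≤ n)]; ring]
        ring
      rw [hstep, hform, hPb, mul_comm]
      apply mul_le_mul_of_nonneg_right hparent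
      have : (n₀ : ℝ) < (n : ℝ) := by exact_mod_cast hcase
      have : 0 < 1 - δ / (n : ℝ) := Pb_factor_pos hδlt (by omega : n₀ < n)
      linarith

end CKTree

namespace CKTree

lemma ancestors_mem (T : CKTree) {S : Set T.E}
    (hanc : ∀ e ∈ S, 1 < T.gen e → T.parent e ∈ S) :
    ∀ e ∈ S, ∀ k, k < T.gen e → T.parent^[k] e ∈ S := by
  intro e he k
  induction k with
  | zero => intro _; simpa using he
  | succ k ih =>
    intro hk
    rw [Function.iterate_succ_apply']
    have hmem := ih (by omega)
    have hgen : T.gen (T.parent^[k] e) = T.gen e - k := T.gen_iterate e k (by omega)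
    exact hanc _ hmem (by omega)

lemma exists_ray_subset (T : CKTree) (S : Set T.E) (hS : S.Infinite)
    (hanc : ∀ e ∈ S, 1 < T.gen e → T.parent e ∈ S) :
    ∃ r : ℕ → T.E, T.IsRay r ∧ ∀ k, r k ∈ S := by
  classical
  have hanc' := T.ancestors_mem hanc
  set D : T.E → Set T.E := fun g => {e ∈ S | T.ple g e} with hD
  -- covering lemma
  have cover : ∀ X : Set T.E, X.Infinite → ∀ I : Finset T.E,
      (∀ e ∈ X, ∃ h ∈ I, e ∈ D h) → ∃ h ∈ I, (D h).Infinite := by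
    intro X hX I hcov
    by_contra h
    push_neg at h
    have hfin : (⋃ h ∈ (I : Set T.E), D h).Finite :=
      Set.Finite.biUnion I.finite_toSet fun g hg => h g hg
    refine hX (hfin.subset ?_)
    intro e he
    obtain ⟨g, hgI, hgD⟩ := hcov e he
    exact Set.mem_biUnion hgI hgD
  have memS_of_D : ∀ g : T.E, (D g).Infinite → g ∈ S := by
    intro g hg
    obtain ⟨e, he, k, hk, hke⟩ := hg.nonempty
    exact hke ▸ hanc' e he k hk
  -- König step
  have step : ∀ g : T.E, (D g).Infinite →
      ∃ h : T.E, T.parent h = g ∧ T.gen h = T.gen g + 1 ∧ (D h).Infinite := by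
    intro g hg
    set m := T.gen g with hm
    set I : Finset T.E := (T.locally_finite (m + 1)).toFinset.filter
      (fun h => T.parent h = g) with hI
    have hX : (D g \ {e : T.E | T.gen e ≤ m}).Infinite := hg.diff (T.finite_gen_le m)
    have hcov : ∀ e ∈ D g \ {e : T.E | T.gen e ≤ m}, ∃ h ∈ I, e ∈ D h := by
      rintro e ⟨⟨heS, k, hk, hke⟩, hgen⟩
      simp only [Set.mem_setOf_eq, not_le] at hgen
      have hgk : T.gen (T.parent^[k] e) = T.gen e - k := T.gen_iterate e k hk
      have hkm : k = T.gen e - m := by rw [hke, ← hm] at hgk; omega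
      have hk1 : 1 ≤ k := by omega
      refine ⟨T.parent^[k - 1] e, ?_, heS, k - 1, by omega, rfl⟩
      have hpar : T.parent (T.parent^[k - 1] e) = g := by
        have hit := Function.iterate_succ_apply' T.parent (k - 1) e
        rw [show (k - 1).succ = k by omega] at hit
        rw [hit] at hke
        exact hke
      have hgen' : T.gen (T.parent^[k - 1] e) = m + 1 := by
        rw [T.gen_iterate e (k - 1) (by omega)]; omega
      simp only [hI, Finset.mem_filter, Set.Finite.mem_toFinset, Set.mem_setOf_eq]
      exact ⟨hgen', hpar⟩
    obtain ⟨h, hhI, hhD⟩ := cover _ hX I hcov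
    simp only [hI, Finset.mem_filter, Set.Finite.mem_toFinset, Set.mem_setOf_eq] at hhI
    exact ⟨h, hhI.2, by omega, hhD⟩
  -- start
  have start : ∃ g : T.E, T.gen g = 1 ∧ (D g).Infinite := by
    have hcov : ∀ e ∈ S, ∃ h ∈ (T.locally_finite 1).toFinset, e ∈ D h := by
      intro e he
      have hp := T.gen_pos e
      refine ⟨T.parent^[T.gen e - 1] e, ?_, he, T.gen e - 1, by omega, rfl⟩
      simp only [Set.Finite.mem_toFinset, Set.mem_setOf_eq]
      rw [T.gen_iterate e (T.gen e - 1) (by omega)]; omega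
    obtain ⟨g, hgI, hgD⟩ := cover S hS _ hcov
    simp only [Set.Finite.mem_toFinset, Set.mem_setOf_eq] at hgI
    exact ⟨g, hgI, hgD⟩
  obtain ⟨g₀, hg₀gen, hg₀D⟩ := start
  have step' : ∀ p : {g : T.E // (D g).Infinite},
      ∃ q : {g : T.E // (D g).Infinite}, T.parent q.1 = p.1 ∧ T.gen q.1 = T.gen p.1 + 1 := by
    intro p
    obtain ⟨h, h1, h2, h3⟩ := step p.1 p.2
    exact ⟨⟨h, h3⟩, h1, h2⟩
  choose Φ hΦ₁ hΦ₂ using step'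
  set f : ℕ → {g : T.E // (D g).Infinite} := fun n => Φ^[n] ⟨g₀, hg₀D⟩ with hf
  have hfs : ∀ n, f (n + 1) = Φ (f n) := fun n => Function.iterate_succ_apply' Φ n _
  have hgen : ∀ n, T.gen (f n).1 = n + 1 := by
    intro n
    induction n with
    | zero => simpa [hf] using hg₀gen
    | succ n ih => rw [hfs n, hΦ₂, ih]
  refine ⟨fun n => (f n).1, ⟨hgen, fun k => ?_⟩, fun k => memS_of_D _ (f k).2⟩
  show T.parent (f (k + 1)).1 = (f k).1
  rw [hfs k]
  exact hΦ₁ (f k)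

end CKTree

/-- If `T` has branching-ruin number `b` and `δ > b`, a percolation whose conditional
edge-survival function satisfies `ψ(e) = 1 - δ/|e|` for `|e| > n₀` has `RT(T,ψ) < 1`
and is subcritical. -/
theorem subcritical_of_delta_gt_brr (T : CKTree) {Ω : Type} [MeasurableSpace Ω]
    (μ : Measure Ω) [IsProbabilityMeasure μ] (Cl : Ω → Set T.E) (ψ : T.E → ℝ)
    (b δ : ℝ) (n₀ : ℕ) (hn₀ : 1 < n₀) (hb : 0 ≤ b) (hbrr : T.brr = ENNReal.ofReal b)
    (hδ : b < δ)
    (hψform : ∀ e, n₀ < T.gen e → ψ e = 1 - δ / (T.gen e : ℝ))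
    (hψ : ∀ e, 0 < ψ e ∧ ψ e ≤ 1)
    (hmeas : ∀ e, MeasurableSet {ω | e ∈ Cl ω})
    (hanc : ∀ ω, ∀ e ∈ Cl ω, 1 < T.gen e → T.parent e ∈ Cl ω)
    (hone : ∀ e, T.gen e = 1 → μ {ω | e ∈ Cl ω} = 1)
    (hcond : ∀ e, 1 < T.gen e →
      (μ[|{ω | T.parent e ∈ Cl ω}]) {ω | e ∈ Cl ω} = ENNReal.ofReal (ψ e)) :
    T.RT ψ < 1 ∧ μ {ω | (Cl ω).Infinite} = 0 := by
  classical
  have hδ0 : 0 < δ := lt_of_le_of_lt hb hδ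
  have hδlt : δ < (n₀ : ℝ) + 1 := by
    obtain ⟨e, he⟩ := T.exists_gen_eq (n₀ + 1) (by omega)
    have h1 := hψform e (by omega)
    have h2 := (hψ e).1
    rw [h1, he] at h2
    have hp : (0 : ℝ) < (n₀ : ℝ) + 1 := by positivity
    have h3 : δ / ((n₀ : ℝ) + 1) < 1 := by push_cast at h2 ⊢; linarith
    rw [div_lt_one hp] at h3
    exact h3
  have hmb : ∀ n, ∀ e : T.E, T.gen e = n →
      μ {ω | e ∈ Cl ω} ≤ ENNReal.ofReal (Pb n₀ δ n) := by
    intro n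
    induction n using Nat.strong_induction_on with
    | _ n ih =>
      intro e hen
      by_cases hcase : n ≤ n₀
      · rw [Pb_eq_one δ hcase, ENNReal.ofReal_one]
        exact prob_le_one
      · push_neg at hcase
        have h1n : 1 < T.gen e := by omega
        have hpg := T.parent_gen e h1n
        set s := {ω | T.parent e ∈ Cl ω} with hs
        set t := {ω | e ∈ Cl ω} with ht
        have hts : t ⊆ s := fun ω hω => hanc ω e hω h1n
        have hcnd := hcond e h1n
        rw [ProbabilityTheory.cond_apply (hmeas (T.parent e)) μ] at hcnd
        by_cases hs0 : μ s = 0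
        · have htz : μ t = 0 := le_antisymm (hs0 ▸ measure_mono hts) zero_le
          rw [htz]
          exact zero_le
        · have hsfin : μ s ≠ ⊤ := measure_ne_top μ s
          have hint : s ∩ t = t := Set.inter_eq_right.mpr hts
          have ht_eq : μ t = ENNReal.ofReal (ψ e) * μ s := by
            calc μ t = μ (s ∩ t) := by rw [hint]
              _ = μ s * ((μ s)⁻¹ * μ (s ∩ t)) := by
                  rw [← mul_assoc, ENNReal.mul_inv_cancel hs0 hsfin, one_mul]
              _ = μ s * ENNReal.ofReal (ψ e) := by rw [hcnd]
              _ = ENNReal.ofReal (ψ e) * μ s := mul_comm _ _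
          have hparent : μ s ≤ ENNReal.ofReal (Pb n₀ δ (n - 1)) :=
            ih (n - 1) (by omega) (T.parent e) (by omega)
          have hψe : ψ e = 1 - δ / (n : ℝ) := by rw [hψform e (by omega), hen]
          have hPb : Pb n₀ δ n = ψ e * Pb n₀ δ (n - 1) := by
            have h := Pb_succ (n₀ := n₀) δ (n := n - 1) (by omega)
            rw [show n - 1 + 1 = n by omega] at h
            rw [h, hψe, mul_comm]
            congr 2
            rw [Nat.cast_sub (by omega : 1 ≤ n)]
            push_cast
            ring
          calc μ t = ENNReal.ofReal (ψ e) * μ s := ht_eq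
            _ ≤ ENNReal.ofReal (ψ e) * ENNReal.ofReal (Pb n₀ δ (n - 1)) :=
                mul_le_mul_right hparent _
            _ = ENNReal.ofReal (ψ e * Pb n₀ δ (n - 1)) :=
                (ENNReal.ofReal_mul (hψ e).1.le).symm
            _ = ENNReal.ofReal (Pb n₀ δ n) := by rw [hPb]
  constructor
  · have hub : T.RT ψ ≤ ENNReal.ofReal (b / δ) := by
      apply sSup_le
      rintro x ⟨γ, hγ, rfl, hcut⟩
      apply ENNReal.ofReal_le_ofReal
      by_contra hcon
      push_neg at hcon
      have hbγδ : b < γ * δ := by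
        rw [div_lt_iff₀ hδ0] at hcon
        linarith
      set C : ℝ := ((n₀ : ℝ) + 1) ^ (δ * γ) with hCdef
      have hC : 0 < C := Real.rpow_pos_of_pos (by positivity) _
      obtain ⟨π, hπ, hsum⟩ := T.exists_cutset_small hb hbrr hbγδ (div_pos hcut hC)
      have hle : T.cutInf (fun e => T.pathProd ψ e ^ γ) ≤ ∑ e ∈ π, T.pathProd ψ e ^ γ :=
        csInf_le (T.cutsums_bddBelow fun e => Real.rpow_nonneg (T.pathProd_nonneg hψ e) γ)
          ⟨π, hπ, rfl⟩
      have hptw : ∀ e ∈ π, T.pathProd ψ e ^ γ ≤ C * (T.gen e : ℝ) ^ (-(γ * δ)) := by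
        intro e _
        have hgp : (1 : ℕ) ≤ T.gen e := T.gen_pos e
        have hA : T.pathProd ψ e ≤ ((n₀ : ℝ) + 1) ^ δ * (T.gen e : ℝ) ^ (-δ) :=
          (T.pathProd_le_Pb (by omega) hψ hδlt hψform (T.gen e) e rfl).trans
            (Pb_le hδ0 hδlt hgp)
        have h1 : T.pathProd ψ e ^ γ ≤ (((n₀ : ℝ) + 1) ^ δ * (T.gen e : ℝ) ^ (-δ)) ^ γ :=
          Real.rpow_le_rpow (T.pathProd_nonneg hψ e) hA hγ.le
        have h2 : (((n₀ : ℝ) + 1) ^ δ * (T.gen e : ℝ) ^ (-δ)) ^ γ =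
            C * (T.gen e : ℝ) ^ (-(γ * δ)) := by
          rw [Real.mul_rpow (Real.rpow_nonneg (by positivity) δ)
              (Real.rpow_nonneg (Nat.cast_nonneg _) _),
            ← Real.rpow_mul (by positivity : (0 : ℝ) ≤ (n₀ : ℝ) + 1),
            ← Real.rpow_mul (Nat.cast_nonneg _),
            show -δ * γ = -(γ * δ) by ring]
        rw [h2] at h1
        exact h1
      have hfin : ∑ e ∈ π, T.pathProd ψ e ^ γ ≤
          C * ∑ e ∈ π, (T.gen e : ℝ) ^ (-(γ * δ)) := by
        rw [Finset.mul_sum]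
        exact Finset.sum_le_sum hptw
      have hlt : C * ∑ e ∈ π, (T.gen e : ℝ) ^ (-(γ * δ)) <
          T.cutInf (fun e => T.pathProd ψ e ^ γ) := by
        have h2 := mul_lt_mul_of_pos_left hsum hC
        have h3 : C * (T.cutInf (fun e => T.pathProd ψ e ^ γ) / C) =
            T.cutInf (fun e => T.pathProd ψ e ^ γ) := by
          field_simp
        rw [h3] at h2
        exact h2
      linarith
    refine lt_of_le_of_lt hub (ENNReal.ofReal_lt_one.2 ?_)
    rw [div_lt_one hδ0]
    exact hδ
  · rw [← nonpos_iff_eq_zero]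
    apply ENNReal.le_of_forall_pos_le_add
    intro ε hε _
    rw [zero_add]
    set C : ℝ := ((n₀ : ℝ) + 1) ^ δ with hCdef
    have hC : 0 < C := Real.rpow_pos_of_pos (by positivity) _
    have hεR : (0 : ℝ) < (ε : ℝ) := hε
    obtain ⟨π, hπ, hsum⟩ := T.exists_cutset_small hb hbrr hδ (div_pos hεR hC)
    have hsub : {ω | (Cl ω).Infinite} ⊆ ⋃ e ∈ π, {ω | e ∈ Cl ω} := by
      intro ω hω
      obtain ⟨r, hr, hrS⟩ := T.exists_ray_subset (Cl ω) hω (hanc ω)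
      obtain ⟨k, hk, -⟩ := hπ r hr
      exact Set.mem_biUnion hk (hrS k)
    calc μ {ω | (Cl ω).Infinite} ≤ μ (⋃ e ∈ π, {ω | e ∈ Cl ω}) := measure_mono hsub
      _ ≤ ∑ e ∈ π, μ {ω | e ∈ Cl ω} := measure_biUnion_finset_le π _
      _ ≤ ∑ e ∈ π, ENNReal.ofReal (Pb n₀ δ (T.gen e)) :=
          Finset.sum_le_sum fun e _ => hmb (T.gen e) e rfl
      _ = ENNReal.ofReal (∑ e ∈ π, Pb n₀ δ (T.gen e)) :=
          (ENNReal.ofReal_sum_of_nonneg fun e _ => Pb_nonneg hδlt).symm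
      _ ≤ ENNReal.ofReal (ε : ℝ) := by
          apply ENNReal.ofReal_le_ofReal
          have hthis : ∑ e ∈ π, Pb n₀ δ (T.gen e) ≤
              C * ∑ e ∈ π, (T.gen e : ℝ) ^ (-δ) := by
            rw [Finset.mul_sum]
            exact Finset.sum_le_sum fun e _ => Pb_le hδ0 hδlt (T.gen_pos e)
          have h2 : C * ∑ e ∈ π, (T.gen e : ℝ) ^ (-δ) < C * ((ε : ℝ) / C) :=
            mul_lt_mul_of_pos_left hsum hC
          have h3 : C * ((ε : ℝ) / C) = (ε : ℝ) := by field_simp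
          linarith
      _ = (ε : ℝ≥0∞) := ENNReal.ofReal_coe_nnreal
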